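/- arXiv:0704.2920 — 2 statements merged into one kernel-verified Lean document; each statement's English description precedes it below -/
import Mathlib

section
/- Let s, l, k be positive integers and let w be a permutation of {1, 2, ..., k} such that s divides l + w(i) - i for every i in {1, ..., k}. Then s divides k or s divides l. -/
/-!
Let `ζ` be a primitive `s`-th root of unity and `S = ∑_{i<k} ζ^i`. The hypothesis says
`ζ^i = ζ^l ζ^{w(i)}`, so summing over `i` and reindexing by `w` gives `S = ζ^l S`. If `s ∤ l`
then `ζ^l ≠ 1`, hence `S = 0`, and `S (ζ - 1) = ζ^k - 1` gives `ζ^k = 1`, i.e. `s ∣ k`.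
-/

open Finset

theorem Equiv.Perm.sum_eq_zero_of_eq_mul_comp {ι R : Type*} [Fintype ι] [Ring R]
    [NoZeroDivisors R] (w : Equiv.Perm ι) (f : ι → R) {c : R} (hc : c ≠ 1)
    (h : ∀ i, f i = c * f (w i)) : ∑ i, f i = 0 := by
  have hfix : c * ∑ i, f i = ∑ i, f i := by
    rw [mul_sum, ← Equiv.sum_comp w]
    exact sum_congr rfl fun i _ => (h i).symm
  have hmul : (c - 1) * ∑ i, f i = 0 := by rw [sub_mul, hfix, one_mul, sub_self]
  exact (mul_eq_zero.mp hmul).resolve_left (sub_ne_zero.mpr hc)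

theorem pow_eq_one_of_geom_sum_eq_zero {R : Type*} [Ring R] {x : R} {n : ℕ}
    (h : ∑ i ∈ range n, x ^ i = 0) : x ^ n = 1 := by
  have := geom_sum_mul x n
  rwa [h, zero_mul, eq_comm, sub_eq_zero] at this

theorem IsPrimitiveRoot.dvd_or_dvd_of_perm {R : Type*} [CommRing R] [IsDomain R] {ζ : R}
    {s l k : ℕ} (hζ : IsPrimitiveRoot ζ s) (hs : 0 < s) (w : Equiv.Perm (Fin k))
    (h : ∀ i : Fin k, (s : ℤ) ∣ ((l : ℤ) + ((w i : ℕ) : ℤ) - ((i : ℕ) : ℤ))) :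
    s ∣ k ∨ s ∣ l := by
  refine or_iff_not_imp_right.mpr fun hsl => ?_
  have hζl : ζ ^ l ≠ 1 := fun e => hsl ((hζ.pow_eq_one_iff_dvd l).mp e)
  have hshift (i : Fin k) : ζ ^ (i : ℕ) = ζ ^ l * ζ ^ (w i : ℕ) := by
    rw [← pow_add, (hζ.isOfFinOrder hs.ne').pow_eq_pow_iff_modEq, ← hζ.eq_orderOf,
      Nat.modEq_iff_dvd]
    exact_mod_cast h i
  have hsum := w.sum_eq_zero_of_eq_mul_comp (fun i : Fin k => ζ ^ (i : ℕ)) hζl hshift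
  rw [Fin.sum_univ_eq_sum_range (fun i => ζ ^ i)] at hsum
  exact (hζ.pow_eq_one_iff_dvd k).mp (pow_eq_one_of_geom_sum_eq_zero hsum)

theorem stmt_0_general (s l k : ℕ) (hs : 0 < s)
    (w : Equiv.Perm (Fin k))
    (h : ∀ i : Fin k, (s : ℤ) ∣ ((l : ℤ) + ((w i : ℕ) : ℤ) - ((i : ℕ) : ℤ))) :
    s ∣ k ∨ s ∣ l :=
  (Complex.isPrimitiveRoot_exp s hs.ne').dvd_or_dvd_of_perm hs w h

theorem stmt_0 (s l k : ℕ) (hs : 0 < s) (hl : 0 < l) (hk : 0 < k)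
    (w : Equiv.Perm (Fin k))
    (h : ∀ i : Fin k, (s : ℤ) ∣ ((l : ℤ) + ((w i : ℕ) : ℤ) - ((i : ℕ) : ℤ))) :
    s ∣ k ∨ s ∣ l :=
  stmt_0_general s l k hs w h
end

section
/- Let l ≥ 2 be an integer and let s be an l-cycle acting on ℝ^l by permutation of coordinates. On the invariant hyperplane V = {x ∈ ℝ^l : ∑ x_i = 0}, the absolute value of det(s - 1) equals l. -/
/-!
On the sum-zero hyperplane `V`, the permutation operator `s` of an `l`-cycle is killed by
`1 + X + ⋯ + X^(l-1)`, because summing a vector over an orbit of the cycle gives its coordinate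
sum. Conversely, no nonzero polynomial of degree `< l` kills `s` on all of `K^l` (the powers
`s^k`, `k < l`, send a basis vector to `l` distinct places), and `s - 1` maps `K^l` into `V`; so
the minimal polynomial of `s|V` has degree at least `l - 1 = dim V`. Hence the characteristic
polynomial of `s|V` is `1 + X + ⋯ + X^(l-1)`, and evaluating it at `1` gives `det (1 - s|V) = l`.
-/

open Finset Polynomial Module

namespace Equiv.Perm

variable {α : Type*} [Fintype α] [DecidableEq α] {σ : Perm α}

theorem two_le_card_of_cycleType_eq_card (hσ : σ.cycleType = {Fintype.card α}) :
    2 ≤ Fintype.card α :=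
  two_le_of_mem_cycleType (hσ ▸ Multiset.mem_singleton_self _)

theorem injOn_pow_apply_of_cycleType_eq_card (hσ : σ.cycleType = {Fintype.card α}) (x : α) :
    Set.InjOn (fun k : ℕ ↦ (σ ^ k) x) (range (Fintype.card α)) := by
  have hcycle : σ.IsCycle := card_cycleType_eq_one.mp (by simp [hσ])
  have hsupport : σ.support = univ := eq_univ_of_card _ (by simp [← sum_cycleType, hσ])
  have hx : σ x ≠ x := mem_support.mp (hsupport ▸ mem_univ x)
  intro a ha b hb hab
  have := pow_inj_mod.mp (hcycle.pow_eq_pow_iff.mpr ⟨x, hx, hab⟩)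
  rwa [hcycle.orderOf, hsupport, card_univ, Nat.mod_eq_of_lt (mem_range.mp ha),
    Nat.mod_eq_of_lt (mem_range.mp hb)] at this

theorem sum_range_pow_apply_of_cycleType_eq_card {M : Type*} [AddCommMonoid M]
    (hσ : σ.cycleType = {Fintype.card α}) (x : α) (f : α → M) :
    ∑ k ∈ range (Fintype.card α), f ((σ ^ k) x) = ∑ y, f y := by
  have hinj := injOn_pow_apply_of_cycleType_eq_card hσ x
  rw [← sum_image (f := f) hinj,
    eq_univ_of_card ((range _).image fun k ↦ (σ ^ k) x)
      (by rw [card_image_of_injOn hinj, card_range])]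

end Equiv.Perm

theorem Module.End.aeval_restrict_apply {R M : Type*} [CommRing R] [AddCommGroup M] [Module R M]
    (f : Module.End R M) {p : Submodule R M} (hf : ∀ x ∈ p, f x ∈ p) (q : R[X]) (x : p) :
    (aeval (f.restrict hf) q x : M) = aeval f q x := by
  induction q using Polynomial.induction_on' with
  | add q r hq hr => simp [hq, hr]
  | monomial k c => simp [Module.End.pow_restrict k hf, LinearMap.restrict_apply]

theorem LinearMap.funLeft_perm_pow (R : Type*) [Semiring R] {α : Type*} (σ : Equiv.Perm α)
    (k : ℕ) : LinearMap.funLeft R R σ ^ k = LinearMap.funLeft R R ⇑(σ ^ k) := by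
  induction k with
  | zero => ext; simp
  | succ k ih => rw [pow_succ', ih, pow_succ, Equiv.Perm.coe_mul, LinearMap.funLeft_comp]; rfl

variable (K : Type*) [Field K]

section SumZero

variable {α : Type*} [Fintype α]

abbrev sumZeroSubspace (α : Type*) [Fintype α] : Submodule K (α → K) :=
  LinearMap.ker (∑ i : α, LinearMap.proj (R := K) (φ := fun _ : α => K) i)

theorem mem_sumZeroSubspace {x : α → K} : x ∈ sumZeroSubspace K α ↔ ∑ i, x i = 0 := by
  simp [LinearMap.sum_apply]

theorem finrank_sumZeroSubspace [Nonempty α] :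
    finrank K (sumZeroSubspace K α) = Fintype.card α - 1 := by
  have hsurj :
      LinearMap.range (∑ i : α, LinearMap.proj (R := K) (φ := fun _ : α => K) i) = ⊤ := by
    classical
    obtain ⟨i⟩ := ‹Nonempty α›
    refine LinearMap.range_eq_top.mpr fun c ↦ ⟨Pi.single i c, ?_⟩
    simp [LinearMap.sum_apply]
  have := LinearMap.finrank_range_add_finrank_ker
    (∑ i : α, LinearMap.proj (R := K) (φ := fun _ : α => K) i)
  rw [hsurj, finrank_top, finrank_self, Module.finrank_fintype_fun_eq_card] at this
  unfold sumZeroSubspace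
  omega

theorem funLeft_perm_mem_sumZeroSubspace (σ : Equiv.Perm α) :
    ∀ x ∈ sumZeroSubspace K α, LinearMap.funLeft K K σ x ∈ sumZeroSubspace K α := by
  intro x hx
  rw [mem_sumZeroSubspace] at hx ⊢
  exact (Equiv.sum_comp σ x).trans hx

end SumZero

section Cycle

variable {α : Type*} [Fintype α] [DecidableEq α] {σ : Equiv.Perm α}

theorem aeval_restrict_funLeft_geom_sum (hσ : σ.cycleType = {Fintype.card α}) :
    aeval ((LinearMap.funLeft K K σ).restrict (funLeft_perm_mem_sumZeroSubspace K σ))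
      (∑ i ∈ range (Fintype.card α), (X : K[X]) ^ i) = 0 := by
  ext x : 1
  apply Subtype.ext
  rw [Module.End.aeval_restrict_apply]
  funext i
  simp only [map_sum, map_pow, aeval_X, LinearMap.funLeft_perm_pow, LinearMap.coe_sum,
    Finset.sum_apply, LinearMap.funLeft_apply, LinearMap.zero_apply, ZeroMemClass.coe_zero,
    Pi.zero_apply]
  rw [Equiv.Perm.sum_range_pow_apply_of_cycleType_eq_card hσ i (x : α → K)]
  exact (mem_sumZeroSubspace K).mp x.2

theorem card_le_natDegree_of_aeval_funLeft_eq_zero (hσ : σ.cycleType = {Fintype.card α})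
    {p : K[X]} (hp : p ≠ 0) (h : aeval (LinearMap.funLeft K K σ) p = 0) :
    Fintype.card α ≤ p.natDegree := by
  by_contra! hlt
  refine hp (Polynomial.ext fun m ↦ ?_)
  rw [coeff_zero]
  rcases lt_or_ge m (Fintype.card α) with hm | hm
  · obtain ⟨x⟩ : Nonempty α := Fintype.card_pos_iff.mp (by omega)
    -- the `m`-th coefficient is the `x`-coordinate of `p(s)` applied to the basis vector at `σ^m x`
    have := congr($h (Pi.single ((σ ^ m) x) 1) x)
    rw [aeval_eq_sum_range' hlt] at this
    simp only [LinearMap.funLeft_perm_pow, LinearMap.coe_sum, LinearMap.coe_smul,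
      Finset.sum_apply, Pi.smul_apply, LinearMap.funLeft_apply, Pi.single_apply, smul_eq_mul,
      mul_ite, mul_one, mul_zero, LinearMap.zero_apply, Pi.zero_apply] at this
    rwa [sum_eq_single_of_mem m (mem_range.mpr hm) fun k hk hkm ↦ if_neg fun hkx ↦
      hkm (Equiv.Perm.injOn_pow_apply_of_cycleType_eq_card hσ x hk (mem_range.mpr hm) hkx),
      if_pos rfl] at this
  · exact coeff_eq_zero_of_natDegree_lt (hlt.trans_le hm)

theorem card_le_natDegree_add_one_of_aeval_restrict_funLeft_eq_zero
    (hσ : σ.cycleType = {Fintype.card α}) {q : K[X]} (hq : q ≠ 0)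
    (h : aeval ((LinearMap.funLeft K K σ).restrict (funLeft_perm_mem_sumZeroSubspace K σ))
      q = 0) :
    Fintype.card α ≤ q.natDegree + 1 := by
  have hmem : ∀ x, (LinearMap.funLeft K K σ - 1) x ∈ sumZeroSubspace K α := fun x ↦ by
    simp [Equiv.sum_comp σ x]
  have hann : aeval (LinearMap.funLeft K K σ) (q * (X - C 1)) = 0 := by
    refine LinearMap.ext fun x ↦ ?_
    rw [aeval_mul, Module.End.mul_apply, map_sub, aeval_X, aeval_C, map_one,
      ← Subtype.coe_mk _ (hmem x),
      ← Module.End.aeval_restrict_apply _ (funLeft_perm_mem_sumZeroSubspace K σ), h]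
    simp
  have :=
    card_le_natDegree_of_aeval_funLeft_eq_zero K hσ (mul_ne_zero hq (X_sub_C_ne_zero 1)) hann
  rwa [natDegree_mul hq (X_sub_C_ne_zero 1), natDegree_X_sub_C] at this

theorem charpoly_restrict_funLeft (hσ : σ.cycleType = {Fintype.card α}) :
    ((LinearMap.funLeft K K σ).restrict (funLeft_perm_mem_sumZeroSubspace K σ)).charpoly =
      ∑ i ∈ range (Fintype.card α), X ^ i := by
  have hcard := Equiv.Perm.two_le_card_of_cycleType_eq_card hσ
  have : Nonempty α := Fintype.card_pos_iff.mp (by omega)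
  set f := (LinearMap.funLeft K K σ).restrict (funLeft_perm_mem_sumZeroSubspace K σ)
  have hq : (minpoly K f).Monic := minpoly.monic (LinearMap.isIntegral f)
  have hmin : Fintype.card α - 1 ≤ (minpoly K f).natDegree :=
    Nat.sub_le_of_le_add <| card_le_natDegree_add_one_of_aeval_restrict_funLeft_eq_zero K hσ
      hq.ne_zero (minpoly.aeval K f)
  have hgeom : ∑ i ∈ range (Fintype.card α), (X : K[X]) ^ i = minpoly K f := by
    refine eq_of_monic_of_dvd_of_natDegree_le hq (monic_geom_sum_X (by omega))
      (minpoly.dvd K f (aeval_restrict_funLeft_geom_sum K hσ)) (le_trans ?_ hmin)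
    refine natDegree_sum_le_of_forall_le _ _ fun i hi ↦ ?_
    rw [natDegree_X_pow]
    have := mem_range.mp hi
    omega
  rw [hgeom]
  refine eq_of_monic_of_dvd_of_natDegree_le hq (LinearMap.charpoly_monic f)
    (LinearMap.minpoly_dvd_charpoly f) ?_
  rwa [LinearMap.charpoly_natDegree, finrank_sumZeroSubspace]

theorem det_restrict_funLeft_sub_one (hσ : σ.cycleType = {Fintype.card α}) :
    ((LinearMap.funLeft K K σ).restrict (funLeft_perm_mem_sumZeroSubspace K σ) - 1).det =
      (-1) ^ (Fintype.card α - 1) * Fintype.card α := by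
  have hcard := Equiv.Perm.two_le_card_of_cycleType_eq_card hσ
  have : Nonempty α := Fintype.card_pos_iff.mp (by omega)
  set f := (LinearMap.funLeft K K σ).restrict (funLeft_perm_mem_sumZeroSubspace K σ)
  have h := LinearMap.eval_charpoly f 1
  have hneg :
      algebraMap K (Module.End K (sumZeroSubspace K α)) 1 - f = (-1 : K) • (f - 1) := by
    rw [map_one]
    module
  rw [charpoly_restrict_funLeft K hσ, hneg, LinearMap.det_smul, finrank_sumZeroSubspace] at h
  simp only [eval_finsetSum, eval_pow, eval_X, one_pow, sum_const, card_range, nsmul_eq_mul,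
    mul_one] at h
  rw [h, ← mul_assoc, ← mul_pow, neg_one_mul, neg_neg, one_pow, one_mul]

end Cycle

theorem stmt_7_general (l : ℕ) (σ : Equiv.Perm (Fin l))
    (hσ : σ.cycleType = {l})
    (V : Submodule ℝ (Fin l → ℝ))
    (hV : V = LinearMap.ker (∑ i : Fin l, LinearMap.proj (R := ℝ) (φ := fun _ : Fin l => ℝ) i))
    (T S : (Fin l → ℝ) →ₗ[ℝ] (Fin l → ℝ))
    (hT : T = LinearMap.funLeft ℝ ℝ ⇑σ)
    (hS : S = T - LinearMap.id)
    (hinv : ∀ x ∈ V, S x ∈ V) :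
    |LinearMap.det (S.restrict hinv)| = (l : ℝ) := by
  subst hV hT hS
  replace hσ : σ.cycleType = {Fintype.card (Fin l)} := by rwa [Fintype.card_fin]
  have hS : (LinearMap.funLeft ℝ ℝ σ - LinearMap.id).restrict hinv =
      (LinearMap.funLeft ℝ ℝ σ).restrict (funLeft_perm_mem_sumZeroSubspace ℝ σ) - 1 := by
    ext1 x
    rfl
  rw [hS, det_restrict_funLeft_sub_one ℝ hσ, abs_mul, abs_pow, abs_neg, abs_one, one_pow,
    one_mul, Fintype.card_fin, Nat.abs_cast]

theorem stmt_7 (l : ℕ) (hl : 2 ≤ l) (σ : Equiv.Perm (Fin l))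
    (hσ : σ.cycleType = {l})
    (V : Submodule ℝ (Fin l → ℝ))
    (hV : V = LinearMap.ker (∑ i : Fin l, LinearMap.proj (R := ℝ) (φ := fun _ : Fin l => ℝ) i))
    (T S : (Fin l → ℝ) →ₗ[ℝ] (Fin l → ℝ))
    (hT : T = LinearMap.funLeft ℝ ℝ ⇑σ)
    (hS : S = T - LinearMap.id)
    (hinv : ∀ x ∈ V, S x ∈ V) :
    |LinearMap.det (S.restrict hinv)| = (l : ℝ) :=
  stmt_7_general l σ hσ V hV T S hT hS hinv
end
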